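/- arXiv:1510.02808 — 5 statements merged into one kernel-verified Lean document; each statement's English description precedes it below -/
import Mathlib

section
/- Let n ≥ 2 and let {μ(t)}_{t=0}^∞ be a sequence in the open unit simplex Δ_n satisfying Assumption (M). Let Θ be a subset of L^∞(Δ_n, Δ̄_n) (portfolio maps with the supremum metric and its induced topology) that is totally bounded in the supremum metric, such that the evaluation map (p, π) ↦ π(p) is jointly measurable. Suppose that for every π ∈ Θ the asymptotic growth rate W(π) = lim_{t→∞} (1/t) log V_π(t) exists, and that the initial distribution ν_0 is a Borel probability measure on Θ with full support. Then the sequence {ν_t}_{t=0}^∞ of wealth distributions satisfies the large deviation principle on Θ with rate function I(π) = W* − W(π), where W* = sup_{π ∈ Θ} W(π). -/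
/-!
The one-period returns of every portfolio lie in `[1/M, M]`, so `log V_π(t) / t` is
`n M²`-Lipschitz in `π` for the supremum metric, uniformly in `t`. An equi-Lipschitz family that
converges pointwise on a totally bounded set converges uniformly; hence `log V_π(t) / t → W(π)`
uniformly and `W` is continuous. The LDP is then Laplace's principle: `∫_B V_π(t) dν₀` is at
most `exp (t (sup_B W + o(1)))`, and at least `exp (t (W(π) - o(1)))` for `π` in an open `B`,
because `ν₀` charges every open neighbourhood of `π`. Dividing by the total mass
`∫ V_π(t) dν₀ = exp (t (W* + o(1)))` gives both bounds.
-/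

open MeasureTheory Filter Topology Finset
open scoped UniformConvergence ENNReal

noncomputable section

/-- The open unit simplex in `ℝⁿ`. -/
def oS (n : ℕ) : Set (Fin n → ℝ) := {p | (∀ i, 0 < p i) ∧ ∑ i, p i = 1}

/-- The closed unit simplex in `ℝⁿ`. -/
def cS (n : ℕ) : Set (Fin n → ℝ) := {p | (∀ i, 0 ≤ p i) ∧ ∑ i, p i = 1}

/-- Relative value of a (time-dependent) weight sequence `w` along market path `μ`. -/
def relV {n : ℕ} (μ w : ℕ → Fin n → ℝ) : ℕ → ℝ
  | 0 => 1
  | t + 1 => relV μ w t * ∑ i, w t i * (μ (t + 1) i / μ t i)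

/-- Relative value of a portfolio map. -/
def pV {n : ℕ} (μ : ℕ → ↥(oS n)) (π : ↥(oS n) → ↥(cS n)) : ℕ → ℝ :=
  relV (fun t => (μ t : Fin n → ℝ)) (fun t => (π (μ t) : Fin n → ℝ))

/-- Assumption (M): relative returns bounded between `1/M` and `M`. -/
def AssumptionM {n : ℕ} (M : ℝ) (μ : ℕ → ↥(oS n)) : Prop :=
  ∀ t i, 1 / M ≤ (μ (t + 1) : Fin n → ℝ) i / (μ t : Fin n → ℝ) i ∧
    (μ (t + 1) : Fin n → ℝ) i / (μ t : Fin n → ℝ) i ≤ M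

/-- Normalized wealth distribution `ν_t(B) = (∫_B V dν₀)/(∫ V dν₀)`. -/
def wd {T : Type*} [MeasurableSpace T] (ν0 : Measure T) (V : T → ℝ) : Measure T :=
  (ν0.withDensity (fun x => ENNReal.ofReal (V x)) Set.univ)⁻¹ •
    ν0.withDensity fun x => ENNReal.ofReal (V x)

/-- Portfolio maps `Δₙ → Δ̄ₙ` with the topology (uniformity) of uniform convergence,
i.e. of the supremum metric. -/
abbrev PMap (n : ℕ) := ↥(oS n) →ᵤ ↥(cS n)

instance {n : ℕ} : MeasurableSpace (PMap n) := borel _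

lemma ofReal_exp_inv_mul_ofReal_exp (a b : ℝ) :
    (ENNReal.ofReal (Real.exp a))⁻¹ * ENNReal.ofReal (Real.exp b) =
      ENNReal.ofReal (Real.exp (b - a)) := by
  rw [← ENNReal.ofReal_inv_of_pos (Real.exp_pos a), ← ENNReal.ofReal_mul (by positivity),
    ← Real.exp_neg, ← Real.exp_add, neg_add_eq_sub]

lemma eventually_ofReal_exp_le_mul {a b : ℝ} (hab : a < b) {C : ℝ≥0∞} (hC : C ≠ 0) :
    ∀ᶠ t : ℕ in atTop,
      ENNReal.ofReal (Real.exp (t * a)) ≤ ENNReal.ofReal (Real.exp (t * b)) * C := by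
  have hdecay : Tendsto (fun t : ℕ => ENNReal.ofReal (Real.exp (t * (a - b)))) atTop (𝓝 0) := by
    simpa using ENNReal.tendsto_ofReal (Real.tendsto_exp_atBot.comp
      (tendsto_natCast_atTop_atTop.atTop_mul_const_of_neg (sub_neg.2 hab)))
  filter_upwards [(tendsto_order.1 hdecay).2 C (pos_iff_ne_zero.2 hC)] with t ht
  calc ENNReal.ofReal (Real.exp (t * a))
      = ENNReal.ofReal (Real.exp (t * b)) * ENNReal.ofReal (Real.exp (t * (a - b))) := by
        rw [← ENNReal.ofReal_mul (Real.exp_nonneg _), ← Real.exp_add]; ring_nf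
    _ ≤ ENNReal.ofReal (Real.exp (t * b)) * C := by gcongr

lemma limsup_inv_mul_log_le {u : ℕ → ℝ≥0∞} {L : EReal}
    (h : ∀ c : ℝ, L < c → ∀ᶠ t : ℕ in atTop, u t ≤ ENNReal.ofReal (Real.exp (t * c))) :
    limsup (fun t : ℕ => (((t : ℝ)⁻¹ : ℝ) : EReal) * ENNReal.log (u t)) atTop ≤ L := by
  refine EReal.le_of_forall_lt_iff_le.1 fun c hc => limsup_le_of_le (by isBoundedDefault) ?_
  filter_upwards [h c hc, eventually_gt_atTop 0] with t hu ht
  have ht' : (0 : ℝ) < t := Nat.cast_pos.2 ht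
  calc (((t : ℝ)⁻¹ : ℝ) : EReal) * ENNReal.log (u t)
      ≤ (((t : ℝ)⁻¹ : ℝ) : EReal) * ((t * c : ℝ) : EReal) := by
        gcongr
        simpa [ENNReal.log_ofReal_of_pos (Real.exp_pos _)] using ENNReal.log_monotone hu
    _ = c := by rw [← EReal.coe_mul, inv_mul_cancel_left₀ ht'.ne']

lemma le_liminf_inv_mul_log {u : ℕ → ℝ≥0∞} {L : EReal}
    (h : ∀ c : ℝ, c < L → ∀ᶠ t : ℕ in atTop, ENNReal.ofReal (Real.exp (t * c)) ≤ u t) :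
    L ≤ liminf (fun t : ℕ => (((t : ℝ)⁻¹ : ℝ) : EReal) * ENNReal.log (u t)) atTop := by
  refine EReal.ge_of_forall_gt_iff_ge.1 fun c hc => le_liminf_of_le (by isBoundedDefault) ?_
  filter_upwards [h c hc, eventually_gt_atTop 0] with t hu ht
  have ht' : (0 : ℝ) < t := Nat.cast_pos.2 ht
  calc (c : EReal) = (((t : ℝ)⁻¹ : ℝ) : EReal) * ((t * c : ℝ) : EReal) := by
        rw [← EReal.coe_mul, inv_mul_cancel_left₀ ht'.ne']
    _ ≤ (((t : ℝ)⁻¹ : ℝ) : EReal) * ENNReal.log (u t) := by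
        gcongr
        simpa [ENNReal.log_ofReal_of_pos (Real.exp_pos _)] using ENNReal.log_monotone hu

lemma wd_apply {X : Type*} [MeasurableSpace X] (ν0 : Measure X) (V : X → ℝ) {B : Set X}
    (hB : MeasurableSet B) :
    wd ν0 V B = (∫⁻ x, ENNReal.ofReal (V x) ∂ν0)⁻¹ * ∫⁻ x in B, ENNReal.ofReal (V x) ∂ν0 := by
  rw [wd, Measure.smul_apply, withDensity_apply _ hB, withDensity_apply _ MeasurableSet.univ,
    Measure.restrict_univ, smul_eq_mul]

lemma eventually_exp_le_and_le_exp {X : Type*} {V : ℕ → X → ℝ} {W : X → ℝ} (hV : ∀ t x, 0 < V t x)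
    (hVW : TendstoUniformly (fun t x => Real.log (V t x) / t) W atTop) {δ : ℝ} (hδ : 0 < δ) :
    ∀ᶠ t : ℕ in atTop, ∀ x,
      Real.exp (t * (W x - δ)) ≤ V t x ∧ V t x ≤ Real.exp (t * (W x + δ)) := by
  filter_upwards [Metric.tendstoUniformly_iff.1 hVW δ hδ, eventually_gt_atTop 0] with t hclose ht x
  have ht' : (0 : ℝ) < t := Nat.cast_pos.2 ht
  have hlog : Real.log (V t x) = t * (Real.log (V t x) / t) := by field_simp
  obtain ⟨hlo, hhi⟩ := abs_lt.1 (by simpa [Real.dist_eq, abs_sub_comm] using hclose x)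
  rw [← Real.exp_log (hV t x), hlog]
  constructor <;> gcongr <;> linarith

section Laplace

variable {X : Type*} [MeasurableSpace X] {ν0 : Measure X} {V : ℕ → X → ℝ} {W : X → ℝ}

lemma eventually_setLIntegral_le [IsProbabilityMeasure ν0] (hV : ∀ t x, 0 < V t x)
    (hVW : TendstoUniformly (fun t x => Real.log (V t x) / t) W atTop)
    {B : Set X} (hB : MeasurableSet B) {a : ℝ} (hWB : ∀ x ∈ B, W x ≤ a) {δ : ℝ} (hδ : 0 < δ) :
    ∀ᶠ t : ℕ in atTop,
      ∫⁻ x in B, ENNReal.ofReal (V t x) ∂ν0 ≤ ENNReal.ofReal (Real.exp (t * (a + δ))) := by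
  filter_upwards [eventually_exp_le_and_le_exp hV hVW hδ] with t hbound
  calc ∫⁻ x in B, ENNReal.ofReal (V t x) ∂ν0
      ≤ ∫⁻ _ in B, ENNReal.ofReal (Real.exp (t * (a + δ))) ∂ν0 := by
        refine setLIntegral_mono' hB fun x hx => ENNReal.ofReal_le_ofReal ?_
        refine (hbound x).2.trans (Real.exp_le_exp.2 ?_)
        have := hWB x hx
        gcongr
    _ ≤ ENNReal.ofReal (Real.exp (t * (a + δ))) := by
        rw [setLIntegral_const]
        exact mul_le_of_le_one_right' prob_le_one

lemma eventually_le_setLIntegral [TopologicalSpace X] [OpensMeasurableSpace X]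
    (hsupp : ∀ U : Set X, IsOpen U → U.Nonempty → 0 < ν0 U)
    (hV : ∀ t x, 0 < V t x)
    (hVW : TendstoUniformly (fun t x => Real.log (V t x) / t) W atTop) (hW : Continuous W)
    {B : Set X} (hB : IsOpen B) {x₀ : X} (hx₀ : x₀ ∈ B) {δ : ℝ} (hδ : 0 < δ) :
    ∀ᶠ t : ℕ in atTop,
      ENNReal.ofReal (Real.exp (t * (W x₀ - δ))) ≤ ∫⁻ x in B, ENNReal.ofReal (V t x) ∂ν0 := by
  set S := B ∩ W ⁻¹' Set.Ioi (W x₀ - δ / 3)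
  have hS : IsOpen S := hB.inter (isOpen_Ioi.preimage hW)
  have hx₀S : x₀ ∈ S := ⟨hx₀, by simp only [Set.mem_preimage, Set.mem_Ioi]; linarith⟩
  have hνS : ν0 S ≠ 0 := (hsupp S hS ⟨x₀, hx₀S⟩).ne'
  filter_upwards [eventually_exp_le_and_le_exp hV hVW (by positivity : 0 < δ / 3),
    eventually_ofReal_exp_le_mul (by linarith : W x₀ - δ < W x₀ - 2 * δ / 3) hνS]
    with t hbound habsorb
  calc ENNReal.ofReal (Real.exp (t * (W x₀ - δ)))
      ≤ ENNReal.ofReal (Real.exp (t * (W x₀ - 2 * δ / 3))) * ν0 S := habsorb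
    _ = ∫⁻ _ in S, ENNReal.ofReal (Real.exp (t * (W x₀ - 2 * δ / 3))) ∂ν0 :=
        (setLIntegral_const _ _).symm
    _ ≤ ∫⁻ x in S, ENNReal.ofReal (V t x) ∂ν0 := by
        refine setLIntegral_mono' hS.measurableSet fun x hx => ENNReal.ofReal_le_ofReal ?_
        refine (Real.exp_le_exp.2 ?_).trans (hbound x).1
        have : W x₀ - δ / 3 < W x := hx.2
        exact mul_le_mul_of_nonneg_left (by linarith) t.cast_nonneg
    _ ≤ ∫⁻ x in B, ENNReal.ofReal (V t x) ∂ν0 := lintegral_mono_set Set.inter_subset_left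

variable [TopologicalSpace X] [OpensMeasurableSpace X] [IsProbabilityMeasure ν0]

theorem limsup_log_wd_le (hsupp : ∀ U : Set X, IsOpen U → U.Nonempty → 0 < ν0 U)
    (hV : ∀ t x, 0 < V t x)
    (hVW : TendstoUniformly (fun t x => Real.log (V t x) / t) W atTop)
    (hW : Continuous W) {F : Set X} (hF : IsClosed F) :
    limsup (fun t : ℕ => (((t : ℝ)⁻¹ : ℝ) : EReal) * ENNReal.log (wd ν0 (V t) F)) atTop
      ≤ -(⨅ x ∈ F, (((⨆ x', W x') - W x : ℝ) : EReal)) := by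
  have hX : Nonempty X := ν0.nonempty_of_neZero
  refine limsup_inv_mul_log_le fun c hc => ?_
  obtain ⟨z, hz, hzc⟩ := EReal.lt_iff_exists_real_btwn.1 hc
  have hWF : ∀ x ∈ F, W x ≤ (⨆ x', W x') + z := by
    intro x hx
    have : ((-z : ℝ) : EReal) < (((⨆ x', W x') - W x : ℝ) : EReal) :=
      (EReal.neg_lt_comm.1 hz).trans_le (iInf₂_le x hx)
    linarith [EReal.coe_lt_coe_iff.1 this]
  obtain ⟨δ, hδ, rfl⟩ : ∃ δ, 0 < δ ∧ c = z + 3 * δ :=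
    ⟨(c - z) / 3, by linarith [EReal.coe_lt_coe_iff.1 hzc], by ring⟩
  obtain ⟨x₀, hx₀⟩ := exists_lt_of_lt_ciSup (sub_lt_self (⨆ x', W x') hδ)
  filter_upwards [eventually_setLIntegral_le (ν0 := ν0) hV hVW hF.measurableSet hWF hδ,
    eventually_le_setLIntegral hsupp hV hVW hW isOpen_univ (Set.mem_univ x₀) hδ]
    with t hnum hden
  rw [Measure.restrict_univ] at hden
  calc wd ν0 (V t) F
      ≤ (ENNReal.ofReal (Real.exp (t * (W x₀ - δ))))⁻¹ *
          ENNReal.ofReal (Real.exp (t * ((⨆ x', W x') + z + δ))) := by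
        rw [wd_apply _ _ hF.measurableSet]
        exact mul_le_mul' (ENNReal.inv_le_inv.2 hden) hnum
    _ ≤ ENNReal.ofReal (Real.exp (t * (z + 3 * δ))) := by
        rw [ofReal_exp_inv_mul_ofReal_exp, ← mul_sub]
        gcongr
        linarith

theorem le_liminf_log_wd (hsupp : ∀ U : Set X, IsOpen U → U.Nonempty → 0 < ν0 U)
    (hV : ∀ t x, 0 < V t x)
    (hVW : TendstoUniformly (fun t x => Real.log (V t x) / t) W atTop)
    (hW : Continuous W) (hWbdd : BddAbove (Set.range W))
    {G : Set X} (hG : IsOpen G) :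
    -(⨅ x ∈ G, (((⨆ x', W x') - W x : ℝ) : EReal)) ≤
      liminf (fun t : ℕ => (((t : ℝ)⁻¹ : ℝ) : EReal) * ENNReal.log (wd ν0 (V t) G)) atTop := by
  refine le_liminf_inv_mul_log fun c hc => ?_
  obtain ⟨x, hxG, hx⟩ : ∃ x ∈ G, (((⨆ x', W x') - W x : ℝ) : EReal) < ((-c : ℝ) : EReal) := by
    simpa only [iInf_lt_iff, exists_prop, EReal.coe_neg] using EReal.lt_neg_comm.1 hc
  obtain ⟨δ, hδ, hcδ⟩ : ∃ δ, 0 < δ ∧ c + 2 * δ = W x - ⨆ x', W x' :=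
    ⟨(W x - (⨆ x', W x') - c) / 2, by linarith [EReal.coe_lt_coe_iff.1 hx], by ring⟩
  filter_upwards [eventually_le_setLIntegral hsupp hV hVW hW hG hxG hδ,
    eventually_setLIntegral_le (ν0 := ν0) hV hVW MeasurableSet.univ
      (fun y _ => le_ciSup hWbdd y) hδ]
    with t hnum hden
  rw [Measure.restrict_univ] at hden
  calc ENNReal.ofReal (Real.exp (t * c))
      ≤ (ENNReal.ofReal (Real.exp (t * ((⨆ x', W x') + δ))))⁻¹ *
          ENNReal.ofReal (Real.exp (t * (W x - δ))) := by
        rw [ofReal_exp_inv_mul_ofReal_exp, ← mul_sub]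
        gcongr
        linarith
    _ ≤ wd ν0 (V t) G := by
        rw [wd_apply _ _ hG.measurableSet]
        exact mul_le_mul' (ENNReal.inv_le_inv.2 hden) hnum

end Laplace

section Portfolio

variable {n : ℕ}

lemma sum_mul_mem_Icc {w r : Fin n → ℝ} (hw : w ∈ cS n) {a b : ℝ}
    (hr : ∀ i, r i ∈ Set.Icc a b) : ∑ i, w i * r i ∈ Set.Icc a b := by
  obtain ⟨hw0, hw1⟩ := hw
  constructor
  · calc a = ∑ i, w i * a := by rw [← Finset.sum_mul, hw1, one_mul]
      _ ≤ ∑ i, w i * r i := by gcongr with i; exacts [hw0 i, (hr i).1]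
  · calc ∑ i, w i * r i ≤ ∑ i, w i * b := by gcongr with i; exacts [hw0 i, (hr i).2]
      _ = b := by rw [← Finset.sum_mul, hw1, one_mul]

lemma abs_sum_mul_sub_sum_mul_le {w w' r : Fin n → ℝ} {b : ℝ} (hr : ∀ i, |r i| ≤ b) :
    |∑ i, w i * r i - ∑ i, w' i * r i| ≤ n * dist w w' * b := by
  rw [← Finset.sum_sub_distrib]
  calc |∑ i, (w i * r i - w' i * r i)| ≤ ∑ i, |w i * r i - w' i * r i| := abs_sum_le_sum_abs _ _
    _ ≤ ∑ _i : Fin n, dist w w' * b := by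
        gcongr with i
        rw [← sub_mul, abs_mul, ← Real.dist_eq]
        exact mul_le_mul (dist_le_pi_dist w w' i) (hr i) (abs_nonneg _) dist_nonneg
    _ = n * dist w w' * b := by simp [mul_assoc]

lemma abs_log_sub_log_le {x y a : ℝ} (ha : 0 < a) (hx : a ≤ x) (hy : a ≤ y) :
    |Real.log x - Real.log y| ≤ |x - y| / a := by
  have key : ∀ {u v : ℝ}, a ≤ u → a ≤ v → Real.log u - Real.log v ≤ |u - v| / a := by
    intro u v hu hv
    have hu0 : 0 < u := ha.trans_le hu
    have hv0 : 0 < v := ha.trans_le hv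
    calc Real.log u - Real.log v = Real.log (u / v) := (Real.log_div hu0.ne' hv0.ne').symm
      _ ≤ u / v - 1 := Real.log_le_sub_one_of_pos (by positivity)
      _ = (u - v) / v := by field_simp
      _ ≤ |u - v| / v := by gcongr; exact le_abs_self _
      _ ≤ |u - v| / a := by gcongr
  rw [abs_le]
  constructor
  · have := key hy hx
    rw [abs_sub_comm] at this
    linarith
  · exact key hx hy

def portfolioReturn (μ : ℕ → ↥(oS n)) (π : ↥(oS n) → ↥(cS n)) (t : ℕ) : ℝ :=
  ∑ i, (π (μ t) : Fin n → ℝ) i * ((μ (t + 1) : Fin n → ℝ) i / (μ t : Fin n → ℝ) i)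

variable {M : ℝ} {μ : ℕ → ↥(oS n)}

lemma pV_eq_prod (π : ↥(oS n) → ↥(cS n)) (t : ℕ) :
    pV μ π t = ∏ s ∈ Finset.range t, portfolioReturn μ π s := by
  induction t with
  | zero => rfl
  | succ t ih => rw [Finset.prod_range_succ, ← ih]; rfl

lemma portfolioReturn_mem_Icc (hAM : AssumptionM M μ) (π : ↥(oS n) → ↥(cS n)) (t : ℕ) :
    portfolioReturn μ π t ∈ Set.Icc (1 / M) M :=
  sum_mul_mem_Icc (π (μ t)).2 fun i => hAM t i

lemma portfolioReturn_pos (hM : 0 < M) (hAM : AssumptionM M μ) (π : ↥(oS n) → ↥(cS n))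
    (t : ℕ) : 0 < portfolioReturn μ π t :=
  (one_div_pos.2 hM).trans_le (portfolioReturn_mem_Icc hAM π t).1

lemma pV_pos (hM : 0 < M) (hAM : AssumptionM M μ) (π : ↥(oS n) → ↥(cS n)) (t : ℕ) :
    0 < pV μ π t := by
  rw [pV_eq_prod]
  exact Finset.prod_pos fun s _ => portfolioReturn_pos hM hAM π s

lemma log_pV_eq_sum (hM : 0 < M) (hAM : AssumptionM M μ) (π : ↥(oS n) → ↥(cS n)) (t : ℕ) :
    Real.log (pV μ π t) = ∑ s ∈ Finset.range t, Real.log (portfolioReturn μ π s) := by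
  rw [pV_eq_prod, Real.log_prod fun s _ => (portfolioReturn_pos hM hAM π s).ne']

lemma log_pV_le (hM : 0 < M) (hAM : AssumptionM M μ) (π : ↥(oS n) → ↥(cS n)) (t : ℕ) :
    Real.log (pV μ π t) ≤ t * Real.log M := by
  rw [log_pV_eq_sum hM hAM]
  calc ∑ s ∈ Finset.range t, Real.log (portfolioReturn μ π s)
      ≤ ∑ _s ∈ Finset.range t, Real.log M := by
        gcongr with s
        · exact portfolioReturn_pos hM hAM π s
        · exact (portfolioReturn_mem_Icc hAM π s).2
    _ = t * Real.log M := by simp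

lemma abs_log_portfolioReturn_sub_le (hM : 0 < M) (hAM : AssumptionM M μ)
    {π π' : ↥(oS n) → ↥(cS n)} {ε : ℝ} (hε : ∀ p, dist (π p) (π' p) ≤ ε) (t : ℕ) :
    |Real.log (portfolioReturn μ π t) - Real.log (portfolioReturn μ π' t)| ≤ n * M ^ 2 * ε := by
  have hr : ∀ i, |(μ (t + 1) : Fin n → ℝ) i / (μ t : Fin n → ℝ) i| ≤ M := fun i =>
    abs_le.2 ⟨by linarith [(hAM t i).1, one_div_pos.2 hM], (hAM t i).2⟩
  calc |Real.log (portfolioReturn μ π t) - Real.log (portfolioReturn μ π' t)|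
      ≤ |portfolioReturn μ π t - portfolioReturn μ π' t| / (1 / M) :=
        abs_log_sub_log_le (one_div_pos.2 hM) (portfolioReturn_mem_Icc hAM π t).1
          (portfolioReturn_mem_Icc hAM π' t).1
    _ ≤ n * ε * M / (1 / M) := by
        gcongr
        refine (abs_sum_mul_sub_sum_mul_le hr).trans ?_
        gcongr
        exact hε (μ t)
    _ = n * M ^ 2 * ε := by field_simp

lemma abs_log_pV_sub_le (hM : 0 < M) (hAM : AssumptionM M μ)
    {π π' : ↥(oS n) → ↥(cS n)} {ε : ℝ} (hε : ∀ p, dist (π p) (π' p) ≤ ε) (t : ℕ) :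
    |Real.log (pV μ π t) - Real.log (pV μ π' t)| ≤ t * (n * M ^ 2 * ε) := by
  rw [log_pV_eq_sum hM hAM, log_pV_eq_sum hM hAM, ← Finset.sum_sub_distrib]
  calc |∑ s ∈ Finset.range t, (Real.log (portfolioReturn μ π s) -
          Real.log (portfolioReturn μ π' s))|
      ≤ ∑ s ∈ Finset.range t, |Real.log (portfolioReturn μ π s) -
          Real.log (portfolioReturn μ π' s)| := Finset.abs_sum_le_sum_abs _ _
    _ ≤ ∑ _s ∈ Finset.range t, n * M ^ 2 * ε := by
        gcongr with s
        exact abs_log_portfolioReturn_sub_le hM hAM hε s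
    _ = t * (n * M ^ 2 * ε) := by simp

end Portfolio

open scoped Uniformity in
theorem UniformEquicontinuous.tendstoUniformly_of_totallyBounded {ι X α : Type*}
    [UniformSpace X] [UniformSpace α] {l : Filter ι} [l.NeBot] {F : ι → X → α} {f : X → α}
    (hF : UniformEquicontinuous F) (hX : TotallyBounded (Set.univ : Set X))
    (hFf : ∀ x, Tendsto (F · x) l (𝓝 (f x))) : TendstoUniformly F f l := by
  intro U hU
  obtain ⟨V, hV, hVU⟩ := comp3_mem_uniformity hU
  have hf : UniformContinuous f :=
    (tendsto_pi_nhds.2 hFf).uniformContinuous_of_uniformEquicontinuous hF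
  obtain ⟨s, hs, hcover⟩ := hX _ (Filter.inter_mem (hf hV) (symm_le_uniformity (hF V hV)))
  filter_upwards [(eventually_all_finite hs).2 fun y _ => hFf y (mem_nhds_left (f y) hV)]
    with i hi x
  obtain ⟨y, hxy, hys, hyx⟩ : ∃ y, (f x, f y) ∈ V ∧ y ∈ s ∧ ∀ j, (F j y, F j x) ∈ V := by
    simpa using hcover (Set.mem_univ x)
  exact hVU (SetRel.prodMk_mem_comp hxy (SetRel.prodMk_mem_comp (hi y hys) (hyx i)))

section SupremumMetric

variable {n : ℕ}

lemma cS_subset_closedBall : cS n ⊆ Metric.closedBall 0 1 := by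
  rintro p ⟨hp0, hp1⟩
  rw [Metric.mem_closedBall, dist_pi_le_iff zero_le_one]
  intro i
  rw [Pi.zero_apply, Real.dist_0_eq_abs, abs_of_nonneg (hp0 i), ← hp1]
  exact Finset.single_le_sum (fun j _ => hp0 j) (Finset.mem_univ i)

-- Makes the supremum metric on `PMap n` real-valued.
instance : BoundedSpace ↥(cS n) :=
  (Metric.isBounded_closedBall.subset cS_subset_closedBall).boundedSpace_subtype

lemma lipschitzWith_log_pV_div {M : ℝ} (hM : 0 < M) {μ : ℕ → ↥(oS n)} (hAM : AssumptionM M μ)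
    (t : ℕ) :
    LipschitzWith (n * M ^ 2).toNNReal
      (fun π : PMap n => Real.log (pV μ (UniformFun.toFun π) t) / t) := by
  refine LipschitzWith.of_dist_le_mul fun π π' => ?_
  rw [Real.coe_toNNReal _ (by positivity), Real.dist_eq, ← sub_div, abs_div, Nat.abs_cast]
  rcases t.eq_zero_or_pos with rfl | ht
  · simp only [CharP.cast_eq_zero, div_zero]; positivity
  rw [div_le_iff₀ (Nat.cast_pos.2 ht), mul_comm]
  exact abs_log_pV_sub_le hM hAM (fun p => (UniformFun.dist_le dist_nonneg).1 le_rfl p) t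

end SupremumMetric

instance {n : ℕ} : BorelSpace (PMap n) := ⟨rfl⟩

theorem stmt0_general {n : ℕ} (M : ℝ) (hM : 0 < M)
    (μ : ℕ → ↥(oS n)) (hAM : AssumptionM M μ)
    (Θ : Set (PMap n)) (hTB : TotallyBounded Θ)
    (W : ↥Θ → ℝ)
    (hW : ∀ θ : ↥Θ, Tendsto (fun t : ℕ => Real.log (pV μ (UniformFun.toFun θ.1) t) / t)
      atTop (𝓝 (W θ)))
    (ν0 : Measure ↥Θ) [IsProbabilityMeasure ν0]
    (hsupp : ∀ U : Set ↥Θ, IsOpen U → U.Nonempty → 0 < ν0 U) :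
    (∀ F : Set ↥Θ, IsClosed F →
      limsup (fun t : ℕ =>
          (((t : ℝ)⁻¹ : ℝ) : EReal) *
            ENNReal.log (wd ν0 (fun θ : ↥Θ => pV μ (UniformFun.toFun θ.1) t) F)) atTop
        ≤ -(⨅ θ ∈ F, (((⨆ θ' : ↥Θ, W θ') - W θ : ℝ) : EReal))) ∧
    (∀ G : Set ↥Θ, IsOpen G →
      -(⨅ θ ∈ G, (((⨆ θ' : ↥Θ, W θ') - W θ : ℝ) : EReal)) ≤
        liminf (fun t : ℕ =>
          (((t : ℝ)⁻¹ : ℝ) : EReal) *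
            ENNReal.log (wd ν0 (fun θ : ↥Θ => pV μ (UniformFun.toFun θ.1) t) G)) atTop) := by
  have hΘ : TotallyBounded (Set.univ : Set ↥Θ) := by
    rw [← Subtype.coe_preimage_self]
    exact totallyBounded_preimage isUniformEmbedding_subtype_val.isUniformInducing hTB
  have hequi : UniformEquicontinuous
      fun t (θ : ↥Θ) => Real.log (pV μ (UniformFun.toFun θ.1) t) / t :=
    LipschitzWith.uniformEquicontinuous _ _ fun t =>
      (lipschitzWith_log_pV_div hM hAM t).comp (LipschitzWith.subtype_val Θ)
  have hWc : Continuous W :=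
    ((tendsto_pi_nhds.2 hW).uniformContinuous_of_uniformEquicontinuous hequi).continuous
  have hunif := hequi.tendstoUniformly_of_totallyBounded hΘ hW
  have hWbdd : BddAbove (Set.range W) := by
    refine ⟨Real.log M, Set.forall_mem_range.2 fun θ => le_of_tendsto (hW θ) ?_⟩
    filter_upwards [eventually_gt_atTop 0] with t ht
    rw [div_le_iff₀ (Nat.cast_pos.2 ht), mul_comm]
    exact log_pV_le hM hAM _ t
  have hV := fun t (θ : ↥Θ) => pV_pos hM hAM (UniformFun.toFun θ.1) t
  exact ⟨fun F hF => limsup_log_wd_le hsupp hV hunif hWc hF,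
    fun G hG => le_liminf_log_wd hsupp hV hunif hWc hWbdd hG⟩

/-- Theorem 1.2 / Theorem main1: LDP for totally bounded families of
portfolio maps. -/
theorem stmt0 {n : ℕ} (hn : 2 ≤ n) (M : ℝ) (hM : 0 < M)
    (μ : ℕ → ↥(oS n)) (hAM : AssumptionM M μ)
    (Θ : Set (PMap n)) (hTB : TotallyBounded Θ)
    (hmeas : Measurable fun pc : ↥(oS n) × ↥Θ => UniformFun.toFun pc.2.1 pc.1)
    (W : ↥Θ → ℝ)
    (hW : ∀ θ : ↥Θ, Tendsto (fun t : ℕ => Real.log (pV μ (UniformFun.toFun θ.1) t) / t)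
      atTop (𝓝 (W θ)))
    (ν0 : Measure ↥Θ) [IsProbabilityMeasure ν0]
    (hsupp : ∀ U : Set ↥Θ, IsOpen U → U.Nonempty → 0 < ν0 U) :
    (∀ F : Set ↥Θ, IsClosed F →
      limsup (fun t : ℕ =>
          (((t : ℝ)⁻¹ : ℝ) : EReal) *
            ENNReal.log (wd ν0 (fun θ : ↥Θ => pV μ (UniformFun.toFun θ.1) t) F)) atTop
        ≤ -(⨅ θ ∈ F, (((⨆ θ' : ↥Θ, W θ') - W θ : ℝ) : EReal))) ∧
    (∀ G : Set ↥Θ, IsOpen G →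
      -(⨅ θ ∈ G, (((⨆ θ' : ↥Θ, W θ') - W θ : ℝ) : EReal)) ≤
        liminf (fun t : ℕ =>
          (((t : ℝ)⁻¹ : ℝ) : EReal) *
            ENNReal.log (wd ν0 (fun θ : ↥Θ => pV μ (UniformFun.toFun θ.1) t) G)) atTop) :=
  stmt0_general M hM μ hAM Θ hTB W hW ν0 hsupp
end
end

section
/- Suppose the market weight sequence {μ(t)} takes values in a finite set E ⊂ Δ_n and the empirical measures ℙ_t converge weakly to a probability measure ℙ on E × E. Let Θ = (Δ̄_n)^E be the set of all portfolio maps on E, with the topology of uniform (equivalently pointwise) convergence. Then: (a) for every π ∈ Θ the asymptotic growth rate W(π) = lim_{t→∞} (1/t) log V_π(t) exists and equals ∫_{E×E} ℓ_π dℙ; (b) there exists π* ∈ Θ with W(π*) = max_{π∈Θ} W(π); and (c) writing ℙ(p,q) = ℙ_1(p) ℙ_2(q | p) with ℙ_1 the first marginal, any such maximizer satisfies π*(p) ∈ argmax_{x ∈ Δ̄_n} ∫_E log( Σ_i x_i q_i/p_i ) ℙ_2(dq | p) for every p ∈ E with ℙ_1(p) > 0. -/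
open scoped Classical

open MeasureTheory Filter Topology Finset
open scoped ENNReal

noncomputable section

/-- Relative value of a portfolio map defined on a finite state space `E`. -/
def pVE {n : ℕ} {E : Finset (Fin n → ℝ)} (μ : ℕ → ↥(oS n))
    (hr : ∀ t, (μ t : Fin n → ℝ) ∈ E) (π : ↥E → ↥(cS n)) : ℕ → ℝ :=
  relV (fun t => (μ t : Fin n → ℝ))
    (fun t => (π ⟨(μ t : Fin n → ℝ), hr t⟩ : Fin n → ℝ))

/-- `ℓ_π(p,q) = log( Σ_i π_i(p) q_i/p_i )` for a portfolio map on `E`. -/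
def lE {n : ℕ} {E : Finset (Fin n → ℝ)} (π : ↥E → ↥(cS n)) (p q : ↥E) : ℝ :=
  Real.log (∑ i, (π p : Fin n → ℝ) i * ((q : Fin n → ℝ) i / (p : Fin n → ℝ) i))



/-!
The logarithm of `V_π(t)` telescopes into `∑_{s<t} ℓ_π(μ(s), μ(s+1))`, so `(1/t) log V_π(t)` is the
integral of `ℓ_π` against the empirical measure `ℙ_t`; on the finite set `E × E` this is a finite
sum weighted by the empirical frequencies, which converge to `ℙ`.

The growth rate `∫ ℓ_π dℙ = ∑_p G_p(π(p))`, with `G_p(x) = ∑_q ℙ(p,q) log(∑_i x_i q_i/p_i)`,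
decouples over the states `p`. Each `G_p` is continuous on the compact simplex (its log-arguments
stay positive because `E ⊆ Δ_n`), so it attains its maximum and choosing a maximizer at each state
maximizes the sum. Conversely, changing a maximizer `π*` at the single state `p` shows that `π*(p)`
maximizes `G_p`.
-/

lemma oS_subset_cS (n : ℕ) : oS n ⊆ cS n := fun _ hp => ⟨fun i => (hp.1 i).le, hp.2⟩

lemma sum_mul_div_pos {n : ℕ} {x p q : Fin n → ℝ} (hx : x ∈ cS n) (hp : p ∈ oS n)
    (hq : q ∈ oS n) : 0 < ∑ i, x i * (q i / p i) := by
  obtain ⟨i, -, hi⟩ : ∃ i ∈ univ, (0 : ℝ) < x i :=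
    exists_lt_of_sum_lt (by simp [hx.2])
  exact sum_pos' (fun j _ => mul_nonneg (hx.1 j) (div_pos (hq.1 j) (hp.1 j)).le)
    ⟨i, mem_univ i, mul_pos hi (div_pos (hq.1 i) (hp.1 i))⟩

lemma relV_eq_prod {n : ℕ} (μ w : ℕ → Fin n → ℝ) (t : ℕ) :
    relV μ w t = ∏ s ∈ range t, ∑ i, w s i * (μ (s + 1) i / μ s i) := by
  induction t with
  | zero => rfl
  | succ t ih => rw [prod_range_succ, ← ih]; rfl

lemma log_pVE {n : ℕ} {E : Finset (Fin n → ℝ)} (μ : ℕ → ↥(oS n))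
    (hr : ∀ t, (μ t : Fin n → ℝ) ∈ E) (π : ↥E → ↥(cS n)) (t : ℕ) :
    Real.log (pVE μ hr π t) =
      ∑ s ∈ range t, lE π ⟨(μ s : Fin n → ℝ), hr s⟩ ⟨(μ (s + 1) : Fin n → ℝ), hr (s + 1)⟩ := by
  rw [pVE, relV_eq_prod, Real.log_prod]
  · rfl
  · exact fun s _ => (sum_mul_div_pos (π _).2 (μ s).2 (μ (s + 1)).2).ne'

theorem tendsto_sum_range_div_of_tendsto_freq {α : Type*} [Fintype α] [DecidableEq α]
    (X : ℕ → α) {P : α → ℝ}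
    (hfreq : ∀ a, Tendsto (fun t : ℕ => (∑ s ∈ range t, if X s = a then (1 : ℝ) else 0) / t)
      atTop (𝓝 (P a)))
    (f : α → ℝ) :
    Tendsto (fun t : ℕ => (∑ s ∈ range t, f (X s)) / t) atTop (𝓝 (∑ a, P a * f a)) := by
  have hcount : ∀ t : ℕ, (∑ s ∈ range t, f (X s)) / t =
      ∑ a, (∑ s ∈ range t, if X s = a then (1 : ℝ) else 0) / t * f a := by
    intro t
    simp only [div_mul_eq_mul_div, ← sum_div, sum_mul, ite_mul, one_mul, zero_mul]
    rw [sum_comm]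
    simp only [sum_ite_eq, mem_univ, if_true]
  simpa only [hcount] using tendsto_finsetSum _ fun a _ => (hfreq a).mul_const (f a)

section SeparableObjective

variable {α β : Type*} [Fintype α] (G : α → β → ℝ)

theorem exists_forall_sum_le_of_forall_exists_forall_le (h : ∀ a, ∃ y, ∀ z, G a z ≤ G a y) :
    ∃ f : α → β, ∀ g : α → β, ∑ a, G a (g a) ≤ ∑ a, G a (f a) := by
  choose f hf using h
  exact ⟨f, fun g => sum_le_sum fun a _ => hf a (g a)⟩

theorem le_of_forall_sum_le [DecidableEq α] {f : α → β}
    (hf : ∀ g : α → β, ∑ a, G a (g a) ≤ ∑ a, G a (f a)) (a : α) (y : β) :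
    G a y ≤ G a (f a) := by
  have hdiff : ∑ b, (G b (Function.update f a y b) - G b (f b)) = G a y - G a (f a) := by
    rw [sum_eq_single a (fun b _ hb => by simp [Function.update_of_ne hb]) (by simp)]
    simp
  have := hf (Function.update f a y)
  rw [sum_sub_distrib] at hdiff
  linarith

end SeparableObjective

theorem exists_forall_sum_mul_log_le {n : ℕ} {κ : Type*} [Fintype κ] (c : κ → ℝ)
    {p : Fin n → ℝ} (hp : p ∈ oS n) {q : κ → Fin n → ℝ} (hq : ∀ j, q j ∈ oS n) :
    ∃ y ∈ cS n, ∀ z ∈ cS n, ∑ j, c j * Real.log (∑ i, z i * (q j i / p i)) ≤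
      ∑ j, c j * Real.log (∑ i, y i * (q j i / p i)) := by
  have hcont : ContinuousOn (fun z : Fin n → ℝ => ∑ j, c j * Real.log (∑ i, z i * (q j i / p i)))
      (cS n) :=
    continuousOn_finsetSum _ fun j _ => continuousOn_const.mul <|
      (by fun_prop : Continuous fun z : Fin n → ℝ => ∑ i, z i * (q j i / p i)).continuousOn.log
        fun z hz => (sum_mul_div_pos hz hp (hq j)).ne'
  obtain ⟨y, hy, hmax⟩ :=
    (isCompact_stdSimplex ℝ (Fin n)).exists_isMaxOn ⟨p, oS_subset_cS n hp⟩ hcont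
  exact ⟨y, hy, fun z hz => hmax hz⟩

theorem stmt6_general {n : ℕ} (E : Finset (Fin n → ℝ)) (hE : ∀ p ∈ E, p ∈ oS n)
    (μ : ℕ → ↥(oS n)) (hr : ∀ t, (μ t : Fin n → ℝ) ∈ E)
    (P : ↥E × ↥E → ℝ)
    (hweak : ∀ x : ↥E × ↥E,
      Tendsto (fun t : ℕ =>
          (∑ s ∈ Finset.range t,
            if (⟨(μ s : Fin n → ℝ), hr s⟩ : ↥E) = x.1 ∧
               (⟨(μ (s + 1) : Fin n → ℝ), hr (s + 1)⟩ : ↥E) = x.2 then (1 : ℝ) else 0) / t)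
        atTop (𝓝 (P x))) :
    (∀ π : ↥E → ↥(cS n),
      Tendsto (fun t : ℕ => Real.log (pVE μ hr π t) / t)
        atTop (𝓝 (∑ x : ↥E × ↥E, P x * lE π x.1 x.2))) ∧
    (∃ πs : ↥E → ↥(cS n), ∀ π : ↥E → ↥(cS n),
      (∑ x : ↥E × ↥E, P x * lE π x.1 x.2) ≤ ∑ x : ↥E × ↥E, P x * lE πs x.1 x.2) ∧
    (∀ πs : ↥E → ↥(cS n),
      (∀ π : ↥E → ↥(cS n),
        (∑ x : ↥E × ↥E, P x * lE π x.1 x.2) ≤ ∑ x : ↥E × ↥E, P x * lE πs x.1 x.2) →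
      ∀ p : ↥E, 0 < ∑ q : ↥E, P (p, q) →
        ∀ x ∈ cS n,
          (∑ q : ↥E, P (p, q) *
              Real.log (∑ i, x i * ((q : Fin n → ℝ) i / (p : Fin n → ℝ) i))) ≤
            ∑ q : ↥E, P (p, q) * lE πs p q) := by
  let X : ℕ → ↥E × ↥E := fun s => (⟨μ s, hr s⟩, ⟨μ (s + 1), hr (s + 1)⟩)
  let G : ↥E → ↥(cS n) → ℝ := fun p x =>
    ∑ q, P (p, q) * Real.log (∑ i, (x : Fin n → ℝ) i * ((q : Fin n → ℝ) i / (p : Fin n → ℝ) i))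
  have hW : ∀ π, ∑ x : ↥E × ↥E, P x * lE π x.1 x.2 = ∑ p, G p (π p) :=
    fun π => Fintype.sum_prod_type _
  refine ⟨fun π => ?_, ?_, fun πs hπs p _ x hx => ?_⟩
  · have hfreq : ∀ x, Tendsto (fun t : ℕ => (∑ s ∈ range t, if X s = x then (1 : ℝ) else 0) / t)
        atTop (𝓝 (P x)) := by
      intro x
      simpa only [X, Prod.ext_iff] using hweak x
    simpa only [log_pVE] using
      tendsto_sum_range_div_of_tendsto_freq X hfreq fun x => lE π x.1 x.2
  · simp only [hW]
    refine exists_forall_sum_le_of_forall_exists_forall_le G fun p => ?_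
    obtain ⟨y, hy, hmax⟩ :=
      exists_forall_sum_mul_log_le (fun q => P (p, q)) (hE _ p.2) fun q => hE _ q.2
    exact ⟨⟨y, hy⟩, fun z => hmax z z.2⟩
  · simp only [hW] at hπs
    exact le_of_forall_sum_le G hπs p ⟨x, hx⟩

/-- Lemma 3.2: finite state space: existence of the asymptotic growth rate
`W(π) = ∫ ℓ_π dℙ`, existence of a log-optimal portfolio map, and its characterization. -/
theorem stmt6 {n : ℕ} (hn : 2 ≤ n) (E : Finset (Fin n → ℝ)) (hE : ∀ p ∈ E, p ∈ oS n)
    (μ : ℕ → ↥(oS n)) (hr : ∀ t, (μ t : Fin n → ℝ) ∈ E)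
    (P : ↥E × ↥E → ℝ) (hP0 : ∀ x, 0 ≤ P x) (hP1 : ∑ x : ↥E × ↥E, P x = 1)
    (hweak : ∀ x : ↥E × ↥E,
      Tendsto (fun t : ℕ =>
          (∑ s ∈ Finset.range t,
            if (⟨(μ s : Fin n → ℝ), hr s⟩ : ↥E) = x.1 ∧
               (⟨(μ (s + 1) : Fin n → ℝ), hr (s + 1)⟩ : ↥E) = x.2 then (1 : ℝ) else 0) / t)
        atTop (𝓝 (P x))) :
    (∀ π : ↥E → ↥(cS n),
      Tendsto (fun t : ℕ => Real.log (pVE μ hr π t) / t)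
        atTop (𝓝 (∑ x : ↥E × ↥E, P x * lE π x.1 x.2))) ∧
    (∃ πs : ↥E → ↥(cS n), ∀ π : ↥E → ↥(cS n),
      (∑ x : ↥E × ↥E, P x * lE π x.1 x.2) ≤ ∑ x : ↥E × ↥E, P x * lE πs x.1 x.2) ∧
    (∀ πs : ↥E → ↥(cS n),
      (∀ π : ↥E → ↥(cS n),
        (∑ x : ↥E × ↥E, P x * lE π x.1 x.2) ≤ ∑ x : ↥E × ↥E, P x * lE πs x.1 x.2) →
      ∀ p : ↥E, 0 < ∑ q : ↥E, P (p, q) →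
        ∀ x ∈ cS n,
          (∑ q : ↥E, P (p, q) *
              Real.log (∑ i, x i * ((q : Fin n → ℝ) i / (p : Fin n → ℝ) i))) ≤
            ∑ q : ↥E, P (p, q) * lE πs p q) :=
  stmt6_general E hE μ hr P hweak
end
end

section
/- Suppose the portfolio map π: Δ_n → Δ̄_n is generated by the positive concave function Φ: Δ_n → (0,∞), i.e., Σ_i π_i(p) q_i/p_i ≥ Φ(q)/Φ(p) for all p, q ∈ Δ_n. Then for every p ∈ Δ_n, the vector v = (v_1,…,v_n) defined by v_i = π_i(p)/p_i − (1/n) Σ_{j=1}^n π_j(p)/p_j satisfies Σ_{i=1}^n v_i = 0 and is a supergradient of log Φ at p, i.e., log Φ(p) + ⟨v, q − p⟩ ≥ log Φ(q) for all q ∈ Δ_n. -/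
open MeasureTheory Filter Topology Finset

noncomputable section

/-!
Writing `S = Σ_i π_i(p) q_i / p_i`, the generating inequality gives `log Φ(q) - log Φ(p) ≤ log S
≤ S - 1`. Since `p`, `q` and `π(p)` all sum to one, `S - 1 = Σ_i (π_i(p)/p_i) (q_i - p_i)`, and
subtracting the mean of `π_i(p)/p_i` changes nothing because `Σ_i (q_i - p_i) = 0`.
-/

theorem Finset.sum_sub_mean_eq_zero {ι : Type*} [Fintype ι] [Nonempty ι] (f : ι → ℝ) :
    ∑ i, (f i - (1 / Fintype.card ι) * ∑ j, f j) = 0 := by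
  have hcard : (Fintype.card ι : ℝ) ≠ 0 := Nat.cast_ne_zero.mpr Fintype.card_ne_zero
  rw [sum_sub_distrib, sum_const, card_univ, nsmul_eq_mul]
  field_simp
  ring

theorem Finset.sum_sub_const_mul_sub_of_sum_eq {ι : Type*} [Fintype ι] (a p q : ι → ℝ) (c : ℝ)
    (hsum : ∑ i, q i = ∑ i, p i) :
    ∑ i, (a i - c) * (q i - p i) = ∑ i, a i * (q i - p i) := by
  simp only [sub_mul, sum_sub_distrib, ← mul_sum, hsum, sub_self, mul_zero, sub_zero]

theorem Finset.sum_div_mul_sub_eq {ι : Type*} [Fintype ι] (w p q : ι → ℝ) (hp : ∀ i, p i ≠ 0) :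
    ∑ i, w i / p i * (q i - p i) = ∑ i, w i * (q i / p i) - ∑ i, w i := by
  rw [← sum_sub_distrib]
  refine sum_congr rfl fun i _ => ?_
  field_simp [hp i]

theorem Real.log_le_log_add_sub_one_of_div_le {x y s : ℝ} (hx : 0 < x) (hy : 0 < y)
    (hs : y / x ≤ s) : Real.log y ≤ Real.log x + (s - 1) := by
  have hlog := Real.log_le_sub_one_of_pos (div_pos hy hx)
  rw [Real.log_div hy.ne' hx.ne'] at hlog
  linarith

theorem nonempty_of_mem_oS {n : ℕ} {p : Fin n → ℝ} (hp : p ∈ oS n) : Nonempty (Fin n) := by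
  by_contra h
  rw [not_nonempty_iff] at h
  simpa using hp.2

theorem stmt13_general {n : ℕ}
    (π : ↥(oS n) → ↥(cS n)) (Φ : (Fin n → ℝ) → ℝ)
    (hpos : ∀ p ∈ oS n, 0 < Φ p)
    (hgen : ∀ p q : ↥(oS n),
      Φ (q : Fin n → ℝ) / Φ (p : Fin n → ℝ) ≤
        ∑ i, (π p : Fin n → ℝ) i * ((q : Fin n → ℝ) i / (p : Fin n → ℝ) i)) :
    ∀ p : ↥(oS n),
      (∑ i, ((π p : Fin n → ℝ) i / (p : Fin n → ℝ) i -
          (1 / n) * ∑ j, (π p : Fin n → ℝ) j / (p : Fin n → ℝ) j) = 0) ∧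
      ∀ q : ↥(oS n),
        Real.log (Φ (q : Fin n → ℝ)) ≤ Real.log (Φ (p : Fin n → ℝ)) +
          ∑ i, ((π p : Fin n → ℝ) i / (p : Fin n → ℝ) i -
              (1 / n) * ∑ j, (π p : Fin n → ℝ) j / (p : Fin n → ℝ) j) *
            ((q : Fin n → ℝ) i - (p : Fin n → ℝ) i) := by
  intro p
  have := nonempty_of_mem_oS p.2
  refine ⟨by simpa using sum_sub_mean_eq_zero fun i => (π p : Fin n → ℝ) i / (p : Fin n → ℝ) i,
    fun q => ?_⟩
  rw [sum_sub_const_mul_sub_of_sum_eq _ _ _ _ (q.2.2.trans p.2.2.symm),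
    sum_div_mul_sub_eq _ _ _ fun i => (p.2.1 i).ne', (π p).2.2]
  exact Real.log_le_log_add_sub_one_of_div_le (hpos _ p.2) (hpos _ q.2) (hgen p q)

/-- Lemma 4.1(i): if `π` is generated by the positive concave function `Φ`,
then `v_i = π_i(p)/p_i − (1/n) Σ_j π_j(p)/p_j` is a supergradient of `log Φ` at `p`. -/
theorem stmt13 {n : ℕ} (hn : 2 ≤ n)
    (π : ↥(oS n) → ↥(cS n)) (Φ : (Fin n → ℝ) → ℝ)
    (hpos : ∀ p ∈ oS n, 0 < Φ p) (hconc : ConcaveOn ℝ (oS n) Φ)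
    (hgen : ∀ p q : ↥(oS n),
      Φ (q : Fin n → ℝ) / Φ (p : Fin n → ℝ) ≤
        ∑ i, (π p : Fin n → ℝ) i * ((q : Fin n → ℝ) i / (p : Fin n → ℝ) i)) :
    ∀ p : ↥(oS n),
      (∑ i, ((π p : Fin n → ℝ) i / (p : Fin n → ℝ) i -
          (1 / n) * ∑ j, (π p : Fin n → ℝ) j / (p : Fin n → ℝ) j) = 0) ∧
      ∀ q : ↥(oS n),
        Real.log (Φ (q : Fin n → ℝ)) ≤ Real.log (Φ (p : Fin n → ℝ)) +
          ∑ i, ((π p : Fin n → ℝ) i / (p : Fin n → ℝ) i -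
              (1 / n) * ∑ j, (π p : Fin n → ℝ) j / (p : Fin n → ℝ) j) *
            ((q : Fin n → ℝ) i - (p : Fin n → ℝ) i) :=
  stmt13_general π Φ hpos hgen
end
end

section
/- The family FG of all functionally generated portfolio maps π: Δ_n → Δ̄_n, equipped with the supremum metric, is not separable; in particular FG is not totally bounded. (For n = 2, the uncountable family π_θ, θ ∈ (0,1), defined by π_θ(p) = (1,0) if p_1 ≤ θ and π_θ(p) = (0,1) if p_1 > θ, consists of functionally generated portfolios and forms an uncountable set whose points are at uniformly positive pairwise supremum distance.) -/
open MeasureTheory Filter Topology Finset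
open scoped UniformConvergence

noncomputable section

/-- A functionally generated portfolio map. -/
def IsFG {n : ℕ} (π : ↥(oS n) → ↥(cS n)) : Prop :=
  ∃ Φ : (Fin n → ℝ) → ℝ, (∀ p ∈ oS n, 0 < Φ p) ∧ ConcaveOn ℝ (oS n) Φ ∧
    ∀ p q : ↥(oS n),
      Φ (q : Fin n → ℝ) / Φ (p : Fin n → ℝ) ≤
        ∑ i, (π p : Fin n → ℝ) i * ((q : Fin n → ℝ) i / (p : Fin n → ℝ) i)

/-- The family `FG` of all functionally generated portfolio maps, regarded as a subset of the
space of portfolio maps with the uniform structure (topology) of the supremum metric. -/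
def FGset (n : ℕ) : Set (↥(oS n) →ᵤ ↥(cS n)) := {π | IsFG (UniformFun.toFun π)}

/-! The stop-loss maps `π_θ`, `θ ∈ (0,1)`, which hold only asset `i` while its market weight is at
most `θ` and none of it otherwise, are generated by the concave function
`Φ(p) = min ((1 - θ) pᵢ, θ (1 - pᵢ))`: at each `p` the portfolio is the one generated by the affine
piece of `Φ` that is active at `p`. For `θ < θ'` the maps `π_θ` and `π_θ'` put weights `0` and `1`
on asset `i` at a market point with `pᵢ = θ'`, so they form an uncountable family at mutual
sup-distance at least `1`. A separable set cannot contain such a family, and a totally bounded set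
in the (countably generated) uniformity of uniform convergence is separable. -/

theorem TopologicalSpace.IsSeparable.countable_of_le_edist {X ι : Type*} [PseudoEMetricSpace X]
    {s : Set X} (hs : IsSeparable s) {f : ι → X} (hfs : ∀ a, f a ∈ s) {ε : ENNReal} (hε : ε ≠ 0)
    (hf : Pairwise fun a b => ε ≤ edist (f a) (f b)) : Countable ι := by
  obtain ⟨c, hc, hsc⟩ := hs
  have hnear : ∀ a, ∃ y ∈ c, edist (f a) y < ε / 2 := fun a =>
    EMetric.mem_closure_iff.1 (hsc (hfs a)) _ (ENNReal.half_pos hε)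
  choose g hgc hg using hnear
  have : Countable c := hc.to_subtype
  refine Function.Injective.countable (f := fun a => (⟨g a, hgc a⟩ : c)) fun a b hab => ?_
  by_contra hne
  have hgab : g a = g b := congrArg Subtype.val hab
  have := calc ε ≤ edist (f a) (f b) := hf hne
    _ ≤ edist (f a) (g a) + edist (f b) (g b) := by
        rw [hgab]; exact edist_triangle_right _ _ _
    _ < ε / 2 + ε / 2 := ENNReal.add_lt_add (hg a) (hg b)
    _ = ε := ENNReal.add_halves ε
  exact this.false

lemma sum_update_eq_sub_add {ι M : Type*} [Fintype ι] [DecidableEq ι] [AddCommGroup M]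
    (f : ι → M) (i : ι) (b : M) : ∑ j, Function.update f i b j = ∑ j, f j - f i + b := by
  rw [Finset.sum_update_of_mem (mem_univ i), Finset.sdiff_singleton_eq_erase,
    ← Finset.sum_erase_add _ _ (mem_univ i)]
  abel

lemma convex_oS (n : ℕ) : Convex ℝ (oS n) := by
  refine fun f hf g hg a b ha hb hab =>
    ⟨fun i => convex_Ioi (0 : ℝ) (hf.1 i) (hg.1 i) ha hb hab, ?_⟩
  simp_rw [Pi.add_apply, Pi.smul_apply]
  rwa [Finset.sum_add_distrib, ← Finset.smul_sum, ← Finset.smul_sum, hf.2, hg.2, smul_eq_mul,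
    smul_eq_mul, mul_one, mul_one]

section StopLoss

variable {n : ℕ}

lemma apply_lt_one_of_mem_oS [Nontrivial (Fin n)] {p : Fin n → ℝ} (hp : p ∈ oS n) (i : Fin n) :
    p i < 1 := by
  obtain ⟨j, hji⟩ := exists_ne i
  have := hp.2 ▸ Finset.add_le_sum (fun k _ => (hp.1 k).le) (mem_univ i) (mem_univ j) hji.symm
  linarith [hp.1 j]

lemma exists_mem_oS_apply_eq [Nontrivial (Fin n)] (i : Fin n) {t : ℝ} (ht : t ∈ Set.Ioo 0 1) :
    ∃ x ∈ oS n, x i = t := by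
  have hn : (1 : ℝ) < n := by exact_mod_cast Fintype.card_fin n ▸ Fintype.one_lt_card
  set c := (1 - t) / (n - 1)
  have hn1 : (0 : ℝ) < n - 1 := by linarith
  have hc : 0 < c := div_pos (by linarith [ht.2]) hn1
  refine ⟨Function.update (fun _ => c) i t, ⟨fun j => ?_, ?_⟩, by simp⟩
  · rcases eq_or_ne j i with rfl | hj
    · simpa using ht.1
    · simpa [hj] using hc
  · rw [sum_update_eq_sub_add]
    simp only [Finset.sum_const, Finset.card_univ, Fintype.card_fin, nsmul_eq_mul, c]
    field_simp [hn1.ne']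
    ring

/-- For `n = 2` and `i = 0` this is the paper's `π_θ`; for larger `n`, the wealth taken out of
asset `i` is spread over the other assets in market proportions. -/
def stopLoss (i : Fin n) (θ : ℝ) (p : Fin n → ℝ) : Fin n → ℝ :=
  if p i ≤ θ then Pi.single i 1 else (1 - p i)⁻¹ • Function.update p i 0

lemma stopLoss_mem_cS [Nontrivial (Fin n)] (i : Fin n) (θ : ℝ) {p : Fin n → ℝ} (hp : p ∈ oS n) :
    stopLoss i θ p ∈ cS n := by
  have hpi : 0 < 1 - p i := sub_pos.2 (apply_lt_one_of_mem_oS hp i)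
  unfold stopLoss
  split_ifs
  · exact ⟨fun j => (Pi.single_nonneg.2 zero_le_one : (0 : Fin n → ℝ) ≤ Pi.single i 1) j, by simp⟩
  · refine ⟨fun j => mul_nonneg (inv_nonneg.2 hpi.le) ?_, ?_⟩
    · rcases eq_or_ne j i with rfl | hj
      · simp
      · simpa [hj] using (hp.1 j).le
    · simp only [Pi.smul_apply, smul_eq_mul, ← Finset.mul_sum, sum_update_eq_sub_add, hp.2,
        add_zero]
      exact inv_mul_cancel₀ hpi.ne'

lemma sum_stopLoss_mul_div (i : Fin n) (θ : ℝ) {p : Fin n → ℝ} (hp : ∀ j, 0 < p j)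
    (q : Fin n → ℝ) :
    ∑ j, stopLoss i θ p j * (q j / p j) =
      if p i ≤ θ then q i / p i else (∑ j, q j - q i) / (1 - p i) := by
  unfold stopLoss
  split_ifs
  · simp [Pi.single_apply]
  · have hterm : ∀ j, Function.update p i 0 j * (q j / p j) = Function.update q i 0 j := by
      intro j
      rcases eq_or_ne j i with rfl | hj
      · simp
      · simp [hj, mul_div_cancel₀ _ (hp j).ne']
    simp only [Pi.smul_apply, smul_eq_mul, mul_assoc, hterm]
    rw [← Finset.mul_sum, sum_update_eq_sub_add, add_zero, div_eq_inv_mul]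

def stopLossGenerator (i : Fin n) (θ : ℝ) (p : Fin n → ℝ) : ℝ :=
  min ((1 - θ) * p i) (θ * (1 - p i))

lemma concaveOn_stopLossGenerator (i : Fin n) (θ : ℝ) :
    ConcaveOn ℝ (oS n) (stopLossGenerator i θ) := by
  have haffine (a b : ℝ) : ConcaveOn ℝ (oS n) fun p : Fin n → ℝ => a + b * p i :=
    (concaveOn_const a (convex_oS n)).add ((b • LinearMap.proj i).concaveOn (convex_oS n))
  refine ((haffine 0 (1 - θ)).inf (haffine θ (-θ))).congr fun p _ => ?_
  exact congr_arg₂ min (by ring) (by ring)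

lemma stopLossGenerator_pos [Nontrivial (Fin n)] (i : Fin n) {θ : ℝ} (hθ : θ ∈ Set.Ioo 0 1)
    {p : Fin n → ℝ} (hp : p ∈ oS n) : 0 < stopLossGenerator i θ p :=
  lt_min (mul_pos (sub_pos.2 hθ.2) (hp.1 i))
    (mul_pos hθ.1 (sub_pos.2 (apply_lt_one_of_mem_oS hp i)))

def stopLossMap [Nontrivial (Fin n)] (i : Fin n) (θ : ℝ) : ↥(oS n) → ↥(cS n) :=
  fun p => ⟨stopLoss i θ p, stopLoss_mem_cS i θ p.2⟩

lemma isFG_stopLossMap [Nontrivial (Fin n)] (i : Fin n) {θ : ℝ} (hθ : θ ∈ Set.Ioo 0 1) :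
    IsFG (stopLossMap i θ) := by
  refine ⟨stopLossGenerator i θ, fun p hp => stopLossGenerator_pos i hθ hp,
    concaveOn_stopLossGenerator i θ, fun ⟨p, hp⟩ ⟨q, hq⟩ => ?_⟩
  have hΦp := stopLossGenerator_pos i hθ hp
  simp only [stopLossMap, sum_stopLoss_mul_div i θ hp.1, hq.2]
  split_ifs with hpθ
  · have : stopLossGenerator i θ p = (1 - θ) * p i := min_eq_left (by nlinarith)
    calc stopLossGenerator i θ q / stopLossGenerator i θ p ≤ (1 - θ) * q i / ((1 - θ) * p i) :=
          this ▸ div_le_div_of_nonneg_right (min_le_left _ _) hΦp.le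
      _ = q i / p i := mul_div_mul_left _ _ (sub_pos.2 hθ.2).ne'
  · have : stopLossGenerator i θ p = θ * (1 - p i) := min_eq_right (by nlinarith)
    calc stopLossGenerator i θ q / stopLossGenerator i θ p ≤ θ * (1 - q i) / (θ * (1 - p i)) :=
          this ▸ div_le_div_of_nonneg_right (min_le_right _ _) hΦp.le
      _ = (1 - q i) / (1 - p i) := mul_div_mul_left _ _ hθ.1.ne'

lemma one_le_edist_stopLossMap [Nontrivial (Fin n)] (i : Fin n) {θ θ' : ℝ}
    (hθ' : θ' ∈ Set.Ioo 0 1) (hlt : θ < θ') :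
    1 ≤ edist (UniformFun.ofFun (stopLossMap i θ)) (UniformFun.ofFun (stopLossMap i θ')) := by
  obtain ⟨x, hx, hxi⟩ := exists_mem_oS_apply_eq i hθ'
  have hθx : stopLoss i θ x i = 0 := by simp [stopLoss, hxi, hlt.not_ge]
  have hθ'x : stopLoss i θ' x i = 1 := by simp [stopLoss, hxi]
  calc (1 : ENNReal) = edist (stopLoss i θ x i) (stopLoss i θ' x i) := by
        simp [hθx, hθ'x, edist_dist]
    _ ≤ edist (stopLossMap i θ ⟨x, hx⟩) (stopLossMap i θ' ⟨x, hx⟩) := edist_le_pi_edist _ _ i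
    _ ≤ _ := le_iSup (fun y => edist (stopLossMap i θ y) (stopLossMap i θ' y)) ⟨x, hx⟩

lemma pairwise_one_le_edist_stopLossMap [Nontrivial (Fin n)] (i : Fin n) :
    Pairwise fun θ θ' : Set.Ioo (0 : ℝ) 1 =>
      1 ≤ edist (UniformFun.ofFun (stopLossMap i θ)) (UniformFun.ofFun (stopLossMap i θ')) := by
  intro θ θ' hne
  rcases (Subtype.coe_ne_coe.2 hne).lt_or_gt with hlt | hlt
  · exact one_le_edist_stopLossMap i θ'.2 hlt
  · exact edist_comm (α := ↥(oS n) →ᵤ ↥(cS n)) _ _ ▸ one_le_edist_stopLossMap i θ.2 hlt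

end StopLoss

/-- Lemma 4.4: `FG`, with the supremum metric, is not separable;
in particular it is not totally bounded. -/
theorem stmt15 (n : ℕ) (hn : 2 ≤ n) :
    ¬ TopologicalSpace.SeparableSpace ↥(FGset n) ∧ ¬ TotallyBounded (FGset n) := by
  have : Nontrivial (Fin n) := Fin.nontrivial_iff_two_le.2 hn
  let i : Fin n := ⟨0, by omega⟩
  have hFG : ¬ TopologicalSpace.IsSeparable (FGset n) := fun hs => by
    have := hs.countable_of_le_edist (fun θ : Set.Ioo (0 : ℝ) 1 => isFG_stopLossMap i θ.2)
      one_ne_zero (pairwise_one_le_edist_stopLossMap i)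
    exact (Cardinal.Real.Ioo_countable_iff.1 (Set.countable_coe_iff.1 this)).not_gt zero_lt_one
  exact ⟨fun h => hFG (.of_subtype _), fun h => hFG h.isSeparable⟩
end
end

section
/- Let C_0 be the set of positive concave functions Φ: Δ_n → (0,∞) with Φ(ē) = 1, where ē = (1/n,…,1/n), and define the metric d(Φ,Ψ) = Σ_{m=1}^∞ 2^{−m} ρ_m(Φ,Ψ)/(1 + ρ_m(Φ,Ψ)) with ρ_m(Φ,Ψ) = max_{p ∈ K_m} |Φ(p) − Ψ(p)| and K_m = {p ∈ Δ_n : p_i ≥ 1/m for all i}. Then (C_0, d) is a compact metric space, and convergence in d is equivalent to locally uniform convergence on Δ_n. -/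
open MeasureTheory Filter Topology Finset

noncomputable section

/-- Concavity of a function defined on the open simplex. -/
def ConcOn {n : ℕ} (Φ : ↥(oS n) → ℝ) : Prop :=
  ∀ (p q : ↥(oS n)) (a b : ℝ), 0 ≤ a → 0 ≤ b → a + b = 1 →
    ∀ r : ↥(oS n), (r : Fin n → ℝ) = a • (p : Fin n → ℝ) + b • (q : Fin n → ℝ) →
      a * Φ p + b * Φ q ≤ Φ r

/-- `C₀`: positive concave functions on `Δₙ` normalized by `Φ(ē) = 1` at the barycenter
`ē = (1/n, …, 1/n)`. -/
def C0 (n : ℕ) : Set (↥(oS n) → ℝ) :=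
  {Φ | (∀ p, 0 < Φ p) ∧ ConcOn Φ ∧
    ∀ p : ↥(oS n), (∀ i, (p : Fin n → ℝ) i = (n : ℝ)⁻¹) → Φ p = 1}

/-- The compact exhaustion `K_m = {p ∈ Δₙ : pᵢ ≥ 1/m ∀ i}`. -/
def Km (n m : ℕ) : Set ↥(oS n) := {p | ∀ i, (m : ℝ)⁻¹ ≤ (p : Fin n → ℝ) i}

/-- `ρ_m(Φ,Ψ) = max_{p ∈ K_m} |Φ(p) − Ψ(p)|`. -/
def rho (n m : ℕ) (Φ Ψ : ↥(oS n) → ℝ) : ℝ := ⨆ p : ↥(Km n m), |Φ p.1 - Ψ p.1|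

/-- The metric `d(Φ,Ψ) = Σ_m 2^{−m} ρ_m/(1+ρ_m)` on `C₀`. -/
def dC0 (n : ℕ) (Φ Ψ : ↥(oS n) → ℝ) : ℝ :=
  ∑' m : ℕ, (1 / 2 : ℝ) ^ (m + 1) *
    (rho n (m + 1) Φ Ψ / (1 + rho n (m + 1) Φ Ψ))

/-!
Everything rests on concavity along segments. Comparing `p` with the barycenter `ē`, where
`Φ = 1`, bounds every `Φ ∈ C₀` by `2n`; comparing two points of `K_m` with a point of the simplex
slightly beyond them makes `Φ` Lipschitz on `K_m`, with constant `4nm`. Hence each `ρ_m` is a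
genuine maximum, `d → 0` iff every `ρ_m → 0`, i.e. iff the convergence is uniform on every `K_m`,
which is locally uniform convergence because the interiors of the `K_m` cover `Δₙ`. Compactness is
Arzelà–Ascoli on each `K_m` plus a diagonal subsequence; the limit stays concave and normalized,
and concavity towards `ē` keeps it positive.
-/

open scoped NNReal BoundedContinuousFunction

section Series

lemma div_one_add_le_add {a b c : ℝ} (ha : 0 ≤ a) (hb : 0 ≤ b) (hc : 0 ≤ c) (h : a ≤ b + c) :
    a / (1 + a) ≤ b / (1 + b) + c / (1 + c) := by
  rw [div_add_div _ _ (by positivity) (by positivity), div_le_div_iff₀ (by positivity)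
    (by positivity)]
  nlinarith [mul_nonneg hb hc, mul_nonneg (mul_nonneg hb hc) (add_nonneg hb hc)]

lemma summable_half_pow_mul_div_one_add {a : ℕ → ℝ} (ha : ∀ m, 0 ≤ a m) :
    Summable fun m => (1 / 2 : ℝ) ^ (m + 1) * (a m / (1 + a m)) := by
  refine Summable.of_nonneg_of_le (fun m => by have := ha m; positivity) (fun m => ?_)
    ((summable_nat_add_iff 1).2 summable_geometric_two)
  have : a m / (1 + a m) ≤ 1 := by rw [div_le_one (by linarith [ha m])]; linarith
  exact mul_le_of_le_one_right (by positivity) this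

lemma tsum_half_pow_mul_div_one_add_le {a b c : ℕ → ℝ} (ha : ∀ m, 0 ≤ a m) (hb : ∀ m, 0 ≤ b m)
    (hc : ∀ m, 0 ≤ c m) (h : ∀ m, a m ≤ b m + c m) :
    ∑' m, (1 / 2 : ℝ) ^ (m + 1) * (a m / (1 + a m)) ≤
      ∑' m, (1 / 2 : ℝ) ^ (m + 1) * (b m / (1 + b m)) +
        ∑' m, (1 / 2 : ℝ) ^ (m + 1) * (c m / (1 + c m)) := by
  rw [← (summable_half_pow_mul_div_one_add hb).tsum_add (summable_half_pow_mul_div_one_add hc)]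
  refine (summable_half_pow_mul_div_one_add ha).tsum_le_tsum (fun m => ?_)
    ((summable_half_pow_mul_div_one_add hb).add (summable_half_pow_mul_div_one_add hc))
  rw [← mul_add]
  exact mul_le_mul_of_nonneg_left (div_one_add_le_add (ha m) (hb m) (hc m) (h m)) (by positivity)

lemma tendsto_tsum_half_pow_mul_div_one_add_iff {ι : Type*} {l : Filter ι} {a : ι → ℕ → ℝ}
    (ha : ∀ k m, 0 ≤ a k m) :
    Tendsto (fun k => ∑' m, (1 / 2 : ℝ) ^ (m + 1) * (a k m / (1 + a k m))) l (𝓝 0) ↔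
      ∀ m, Tendsto (fun k => a k m) l (𝓝 0) := by
  constructor
  · intro h m
    have hterm : Tendsto (fun k => a k m / (1 + a k m)) l (𝓝 0) := by
      have hle : ∀ k, (1 / 2 : ℝ) ^ (m + 1) * (a k m / (1 + a k m)) ≤
          ∑' m, (1 / 2 : ℝ) ^ (m + 1) * (a k m / (1 + a k m)) := fun k =>
        (summable_half_pow_mul_div_one_add (ha k)).le_tsum m fun j _ => by
          have := ha k j; positivity
      have := (squeeze_zero (fun k => by have := ha k m; positivity) hle h).const_mul
        ((2 : ℝ) ^ (m + 1))
      simpa [← mul_assoc, ← mul_pow] using this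
    -- `t = s / (1 - s)` for `s = t / (1 + t)`, and `s ↦ s / (1 - s)` is continuous at `0`.
    have hinv : ∀ k, a k m / (1 + a k m) / (1 - a k m / (1 + a k m)) = a k m := fun k => by
      have := ha k m
      field_simp
      ring
    have := hterm.div (tendsto_const_nhds.sub hterm) (by norm_num : (1 : ℝ) - 0 ≠ 0)
    rw [zero_div] at this
    exact this.congr hinv
  · intro h
    have hlim : ∀ m, Tendsto (fun k => (1 / 2 : ℝ) ^ (m + 1) * (a k m / (1 + a k m))) l
        (𝓝 0) := fun m => by
      simpa using ((h m).div (tendsto_const_nhds.add (h m)) (by norm_num : (1 : ℝ) + 0 ≠ 0)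
        ).const_mul ((1 / 2 : ℝ) ^ (m + 1))
    have hbound : ∀ k m, ‖(1 / 2 : ℝ) ^ (m + 1) * (a k m / (1 + a k m))‖ ≤ (1 / 2) ^ (m + 1) :=
      fun k m => by
        have := ha k m
        rw [Real.norm_eq_abs, abs_of_nonneg (by positivity)]
        exact mul_le_of_le_one_right (by positivity) ((div_le_one (by linarith)).2 (by linarith))
    simpa using tendsto_tsum_of_dominated_convergence
      ((summable_nat_add_iff 1).2 summable_geometric_two) hlim (Eventually.of_forall hbound)

end Series

theorem exists_subseq_tendstoUniformlyOn_of_lipschitzOnWith {X : Type*} [PseudoMetricSpace X]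
    {K : ℕ → Set X} (hK : ∀ m, IsCompact (K m)) {f : ℕ → X → ℝ} {C : ℕ → ℝ}
    (hC : ∀ m k, ∀ x ∈ K m, |f k x| ≤ C m) {L : ℕ → ℝ≥0}
    (hL : ∀ m k, LipschitzOnWith (L m) (f k) (K m)) :
    ∃ g : X → ℝ, ∃ φ : ℕ → ℕ, StrictMono φ ∧
      ∀ m, TendstoUniformlyOn (fun k => f (φ k)) g atTop (K m) := by
  have : ∀ m, CompactSpace (K m) := fun m => isCompact_iff_compactSpace.1 (hK m)
  let F : ℕ → ∀ m, K m →ᵇ ℝ := fun k m =>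
    .mkOfCompact ⟨(K m).domRestrict (f k), (hL m k).to_restrict.continuous⟩
  have hA : ∀ m, IsCompact (closure (Set.range fun k => F k m)) := fun m =>
    BoundedContinuousFunction.arzela_ascoli (Metric.closedBall 0 (C m)) (isCompact_closedBall 0 _)
      _ fun _ x ⟨k, hk⟩ => by
        rw [← hk, Metric.mem_closedBall, dist_zero_right, Real.norm_eq_abs]
        exact hC m k x x.2
      (LipschitzWith.uniformEquicontinuous _ (L m) fun ⟨_, k, rfl⟩ =>
        (hL m k).to_restrict).equicontinuous
  -- a diagonal subsequence, from sequential compactness of the countable product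
  obtain ⟨G, -, φ, hφ, hG⟩ := (isCompact_univ_pi hA).isSeqCompact (x := F)
    fun k => Set.mem_univ_pi.2 fun m => subset_closure ⟨k, rfl⟩
  have hGm : ∀ m, TendstoUniformly (fun k (x : K m) => f (φ k) x) (G m) atTop := fun m =>
    BoundedContinuousFunction.tendsto_iff_tendstoUniformly.1 (tendsto_pi_nhds.1 hG m)
  refine ⟨fun x => limUnder atTop fun k => f (φ k) x, φ, hφ, fun m => ?_⟩
  rw [tendstoUniformlyOn_iff_tendstoUniformly_comp_coe]
  convert hGm m using 1
  funext x
  exact ((hGm m).tendsto_at x).limUnder_eq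

section Simplex

variable {n : ℕ}

lemma ne_zero_of_oS (p : oS n) : n ≠ 0 := by
  rintro rfl
  simpa using p.2.2

lemma coord_le_one (p : oS n) (i : Fin n) : p.1 i ≤ 1 :=
  p.2.2 ▸ Finset.single_le_sum (fun j _ => (p.2.1 j).le) (Finset.mem_univ i)

lemma barycenter_mem_oS (hn : n ≠ 0) : (fun _ : Fin n => (n : ℝ)⁻¹) ∈ oS n :=
  ⟨fun _ => by positivity, by simp [Finset.card_univ, hn]⟩

lemma exists_oS_eq_smul_add_smul {p r : oS n} {a : ℝ} (ha : a < 1)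
    (hpr : ∀ i, a * p.1 i < r.1 i) : ∃ q : oS n, r.1 = a • p.1 + (1 - a) • q.1 := by
  have h1a : 1 - a ≠ 0 := by linarith
  refine ⟨⟨fun i => (r.1 i - a * p.1 i) / (1 - a),
    fun i => div_pos (by linarith [hpr i]) (by linarith), ?_⟩, ?_⟩
  · rw [← Finset.sum_div, Finset.sum_sub_distrib, ← Finset.mul_sum, r.2.2, p.2.2, mul_one,
      div_self h1a]
  · funext i
    simp only [Pi.add_apply, Pi.smul_apply, smul_eq_mul]
    field_simp
    ring

lemma ConcOn.mul_le_of_forall_mul_lt {Φ : oS n → ℝ} (hΦ : ConcOn Φ) (h0 : ∀ q, 0 ≤ Φ q)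
    {p r : oS n} {a : ℝ} (ha0 : 0 ≤ a) (ha1 : a < 1) (hpr : ∀ i, a * p.1 i < r.1 i) :
    a * Φ p ≤ Φ r := by
  obtain ⟨q, hq⟩ := exists_oS_eq_smul_add_smul ha1 hpr
  have := hΦ p q a (1 - a) ha0 (by linarith) (by ring) r hq
  nlinarith [h0 q]

lemma eventually_inv_lt_coord (p : oS n) : ∀ᶠ m : ℕ in atTop, ∀ i, (m : ℝ)⁻¹ < p.1 i :=
  eventually_all.2 fun i => tendsto_inv_atTop_nhds_zero_nat.eventually_lt_const (p.2.1 i)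

lemma Km_mem_nhds {m : ℕ} {p : oS n} (h : ∀ i, (m : ℝ)⁻¹ < p.1 i) : Km n m ∈ 𝓝 p := by
  have : ∀ i, ∀ᶠ q : oS n in 𝓝 p, (m : ℝ)⁻¹ < q.1 i := fun i =>
    ((continuous_apply i).comp continuous_subtype_val).continuousAt.eventually_const_lt (h i)
  filter_upwards [eventually_all.2 this] with q hq i using (hq i).le

lemma isCompact_Km {m : ℕ} (hm : 0 < m) : IsCompact (Km n m) := by
  set T : Set (Fin n → ℝ) := {x | ∀ i, (m : ℝ)⁻¹ ≤ x i}
  have hT : IsClosed T := by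
    simp only [T, Set.ofPred_forall]
    exact isClosed_iInter fun i => isClosed_le continuous_const (continuous_apply i)
  have hS : oS n ∩ T = {x | ∑ i, x i = 1} ∩ T := by
    ext x
    refine ⟨fun ⟨⟨_, hx⟩, hxT⟩ => ⟨hx, hxT⟩, fun ⟨hx, hxT⟩ => ⟨⟨fun i => ?_, hx⟩, hxT⟩⟩
    exact (inv_pos.2 (Nat.cast_pos.2 hm)).trans_le (hxT i)
  show IsCompact (Subtype.val ⁻¹' T)
  rw [Subtype.isCompact_iff, Subtype.image_preimage_coe, hS]
  refine (isCompact_Icc (a := 0) (b := 1)).of_isClosed_subset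
    ((isClosed_eq (by fun_prop) continuous_const).inter hT) ?_
  rintro x ⟨hx, hxT⟩
  have hpos : ∀ i, 0 ≤ x i := fun i => (inv_nonneg.2 (Nat.cast_nonneg m)).trans (hxT i)
  exact ⟨hpos, fun i =>
    (Finset.single_le_sum (fun j _ => hpos j) (Finset.mem_univ i)).trans_eq hx⟩

lemma tendstoLocallyUniformly_iff_forall_Km {ι β : Type*} [UniformSpace β] {l : Filter ι}
    {F : ι → oS n → β} {f : oS n → β} :
    TendstoLocallyUniformly F f l ↔ ∀ m, TendstoUniformlyOn F f l (Km n (m + 1)) := by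
  refine ⟨fun h m => (tendstoLocallyUniformlyOn_iff_tendstoUniformlyOn_of_compact
    (isCompact_Km m.succ_pos)).1 h.tendstoLocallyUniformlyOn, fun h => ?_⟩
  refine tendstoLocallyUniformly_of_forall_exists_nhds fun p => ?_
  obtain ⟨m, hm⟩ := ((tendsto_add_atTop_nat 1).eventually (eventually_inv_lt_coord p)).exists
  exact ⟨_, Km_mem_nhds hm, h m⟩

end Simplex

section C0

variable {n : ℕ} {Φ Ψ : oS n → ℝ}

lemma apply_barycenter_of_mem_C0 (hΦ : Φ ∈ C0 n) (hn : n ≠ 0) :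
    Φ ⟨_, barycenter_mem_oS hn⟩ = 1 :=
  hΦ.2.2 _ fun _ => rfl

lemma apply_le_two_mul_of_mem_C0 (hΦ : Φ ∈ C0 n) (p : oS n) : Φ p ≤ 2 * n := by
  have hn := ne_zero_of_oS p
  have hn1 : (1 : ℝ) ≤ n := Nat.one_le_cast.2 (Nat.pos_of_ne_zero hn)
  -- concavity on the segment from `p` through the barycenter `ē`, where `Φ = 1`
  have key := hΦ.2.1.mul_le_of_forall_mul_lt (fun q => (hΦ.1 q).le)
    (r := ⟨_, barycenter_mem_oS hn⟩) (a := (2 * (n : ℝ))⁻¹) (by positivity)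
    (inv_lt_one_of_one_lt₀ (by linarith)) fun i => by
      calc (2 * (n : ℝ))⁻¹ * p.1 i ≤ (2 * (n : ℝ))⁻¹ := mul_le_of_le_one_right (by positivity)
            (coord_le_one p i)
        _ < (n : ℝ)⁻¹ := by gcongr; linarith
  rw [apply_barycenter_of_mem_C0 hΦ hn, inv_mul_le_iff₀ (by positivity), mul_one] at key
  exact key

lemma abs_sub_le_two_mul_of_mem_C0 (hΦ : Φ ∈ C0 n) (hΨ : Ψ ∈ C0 n) (p : oS n) :
    |Φ p - Ψ p| ≤ 2 * n := by
  have := apply_le_two_mul_of_mem_C0 hΦ p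
  have := apply_le_two_mul_of_mem_C0 hΨ p
  rw [abs_sub_le_iff]
  constructor <;> linarith [hΦ.1 p, hΨ.1 p]

lemma sub_le_mul_dist_of_mem_Km (hΦ : Φ ∈ C0 n) {m : ℕ} (hm : 0 < m) {p q : oS n}
    (hq : q ∈ Km n m) : Φ p - Φ q ≤ 4 * n * m * dist p q := by
  rcases eq_or_ne p q with rfl | hpq
  · simp
  set d := dist p q
  have hd : 0 < d := dist_pos.2 hpq
  set t : ℝ := (2 * m)⁻¹
  have ht : 0 < t := by positivity
  have htq : ∀ i, t < q.1 i := fun i =>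
    (inv_strictAnti₀ (by positivity) (by linarith [(Nat.one_le_cast (α := ℝ)).2 hm])).trans_le
      (hq i)
  -- `q` lies on the segment from `p` to a point of the simplex at sup-distance `t` beyond `q`
  have key : t / (t + d) * Φ p ≤ Φ q := by
    refine hΦ.2.1.mul_le_of_forall_mul_lt (fun r => (hΦ.1 r).le) (by positivity)
      ((div_lt_one (by positivity)).2 (by linarith)) fun i => ?_
    have hpi : p.1 i - q.1 i ≤ d :=
      (le_abs_self _).trans ((Real.dist_eq _ _).symm.trans_le (dist_le_pi_dist p.1 q.1 i))
    rw [div_mul_eq_mul_div, div_lt_iff₀ (by positivity)]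
    nlinarith [htq i, mul_le_mul_of_nonneg_left hpi ht.le]
  rw [div_mul_eq_mul_div, div_le_iff₀ (by positivity)] at key
  have hbound : t * (Φ p - Φ q) ≤ t * (4 * n * m * d) := by
    have hmt : t * (4 * n * m * d) = 2 * n * d := by simp only [t]; field_simp; ring
    nlinarith [apply_le_two_mul_of_mem_C0 hΦ q]
  exact le_of_mul_le_mul_left hbound ht

lemma lipschitzOnWith_Km_of_mem_C0 (hΦ : Φ ∈ C0 n) {m : ℕ} (hm : 0 < m) :
    LipschitzOnWith (4 * n * m : ℕ) Φ (Km n m) := by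
  refine LipschitzOnWith.of_dist_le_mul fun p hp q hq => ?_
  rw [Real.dist_eq, abs_sub_le_iff]
  push_cast
  exact ⟨sub_le_mul_dist_of_mem_Km hΦ hm hq, dist_comm p q ▸ sub_le_mul_dist_of_mem_Km hΦ hm hp⟩

lemma mem_C0_of_tendsto {ι : Type*} {l : Filter ι} [l.NeBot] {F : ι → oS n → ℝ}
    (hF : ∀ k, F k ∈ C0 n) (h : ∀ p, Tendsto (fun k => F k p) l (𝓝 (Ψ p))) : Ψ ∈ C0 n := by
  have hconc : ConcOn Ψ := fun p q a b ha hb hab r hr =>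
    le_of_tendsto_of_tendsto' (((h p).const_mul a).add ((h q).const_mul b)) (h r) fun k =>
      (hF k).2.1 p q a b ha hb hab r hr
  have hnorm : ∀ p : oS n, (∀ i, p.1 i = (n : ℝ)⁻¹) → Ψ p = 1 := fun p hp =>
    tendsto_nhds_unique (h p) (tendsto_const_nhds.congr fun k => ((hF k).2.2 p hp).symm)
  refine ⟨fun p => ?_, hconc, hnorm⟩
  have hn := ne_zero_of_oS p
  obtain ⟨m, hmp, hm⟩ := ((eventually_inv_lt_coord p).and (eventually_ge_atTop 2)).exists
  have hm1 : (1 : ℝ) < m := by exact_mod_cast hm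
  have hn1 : (n : ℝ)⁻¹ ≤ 1 := inv_le_one_of_one_le₀ (Nat.one_le_cast.2 (Nat.pos_of_ne_zero hn))
  -- `p` is a convex combination giving weight `1 / m` to the barycenter, where `Ψ = 1`
  have key := hconc.mul_le_of_forall_mul_lt
    (fun q => ge_of_tendsto' (h q) fun k => ((hF k).1 q).le) (p := ⟨_, barycenter_mem_oS hn⟩)
    (r := p) (a := (m : ℝ)⁻¹) (by positivity) (inv_lt_one_of_one_lt₀ hm1) fun i =>
      (mul_le_of_le_one_right (by positivity) hn1).trans_lt (hmp i)
  rw [hnorm _ fun _ => rfl, mul_one] at key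
  exact (inv_pos.2 (by linarith)).trans_le key

end C0

section Rho

variable {n m : ℕ} {Φ Ψ X : oS n → ℝ}

lemma rho_nonneg : 0 ≤ rho n m Φ Ψ :=
  Real.iSup_nonneg fun _ => abs_nonneg _

lemma rho_comm : rho n m Φ Ψ = rho n m Ψ Φ := by
  simp only [rho, abs_sub_comm]

lemma rho_le {c : ℝ} (hc : 0 ≤ c) (h : ∀ p ∈ Km n m, |Φ p - Ψ p| ≤ c) : rho n m Φ Ψ ≤ c :=
  Real.iSup_le (fun p => h p.1 p.2) hc

lemma abs_sub_le_rho (hb : BddAbove (Set.range fun p : Km n m => |Φ p - Ψ p|)) {p : oS n}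
    (hp : p ∈ Km n m) : |Φ p - Ψ p| ≤ rho n m Φ Ψ :=
  le_ciSup hb ⟨p, hp⟩

lemma bddAbove_abs_sub_of_mem_C0 (hΦ : Φ ∈ C0 n) (hΨ : Ψ ∈ C0 n) :
    BddAbove (Set.range fun p : Km n m => |Φ p - Ψ p|) :=
  ⟨2 * n, by rintro _ ⟨p, rfl⟩; exact abs_sub_le_two_mul_of_mem_C0 hΦ hΨ p⟩

lemma rho_triangle (hΦΨ : BddAbove (Set.range fun p : Km n m => |Φ p - Ψ p|))
    (hΨX : BddAbove (Set.range fun p : Km n m => |Ψ p - X p|)) :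
    rho n m Φ X ≤ rho n m Φ Ψ + rho n m Ψ X :=
  rho_le (add_nonneg rho_nonneg rho_nonneg) fun _ hp =>
    (abs_sub_le _ _ _).trans (add_le_add (abs_sub_le_rho hΦΨ hp) (abs_sub_le_rho hΨX hp))

lemma tendsto_rho_iff {ι : Type*} {l : Filter ι} {F : ι → oS n → ℝ}
    (hb : ∀ k, BddAbove (Set.range fun p : Km n m => |F k p - Ψ p|)) :
    Tendsto (fun k => rho n m (F k) Ψ) l (𝓝 0) ↔ TendstoUniformlyOn F Ψ l (Km n m) := by
  rw [Metric.tendstoUniformlyOn_iff]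
  constructor
  · intro h ε hε
    filter_upwards [h.eventually (gt_mem_nhds hε)] with k hk _ hp
    rw [dist_comm, Real.dist_eq]
    exact (abs_sub_le_rho (hb k) hp).trans_lt hk
  · intro h
    refine tendsto_order.2 ⟨fun a ha => Eventually.of_forall fun k => ha.trans_le rho_nonneg,
      fun ε hε => ?_⟩
    filter_upwards [h (ε / 2) (by positivity)] with k hk
    refine (rho_le (by positivity) fun p hp => ?_).trans_lt (half_lt_self hε)
    rw [← Real.dist_eq, dist_comm]
    exact (hk p hp).le

end Rho

section Metric

variable {n : ℕ} {Φ Ψ X : oS n → ℝ}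

lemma dC0_comm : dC0 n Φ Ψ = dC0 n Ψ Φ := by
  simp only [dC0, rho_comm (Φ := Φ)]

lemma dC0_triangle (hΦ : Φ ∈ C0 n) (hΨ : Ψ ∈ C0 n) (hX : X ∈ C0 n) :
    dC0 n Φ X ≤ dC0 n Φ Ψ + dC0 n Ψ X :=
  tsum_half_pow_mul_div_one_add_le (fun _ => rho_nonneg) (fun _ => rho_nonneg)
    (fun _ => rho_nonneg) fun _ => rho_triangle (bddAbove_abs_sub_of_mem_C0 hΦ hΨ)
      (bddAbove_abs_sub_of_mem_C0 hΨ hX)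

lemma tendsto_dC0_iff {ι : Type*} {l : Filter ι} {F : ι → oS n → ℝ} (hF : ∀ k, F k ∈ C0 n)
    (hΨ : Ψ ∈ C0 n) :
    Tendsto (fun k => dC0 n (F k) Ψ) l (𝓝 0) ↔ TendstoLocallyUniformly F Ψ l := by
  simp only [dC0]
  rw [tendstoLocallyUniformly_iff_forall_Km,
    tendsto_tsum_half_pow_mul_div_one_add_iff fun _ _ => rho_nonneg]
  exact forall_congr' fun m => tendsto_rho_iff fun k => bddAbove_abs_sub_of_mem_C0 (hF k) hΨ

lemma dC0_eq_zero_iff (hΦ : Φ ∈ C0 n) (hΨ : Ψ ∈ C0 n) : dC0 n Φ Ψ = 0 ↔ Φ = Ψ := by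
  refine ⟨fun h => ?_, by rintro rfl; simp [dC0, rho]⟩
  have := (tendsto_dC0_iff (l := (atTop : Filter ℕ)) (fun _ => hΦ) hΨ).1
    (tendsto_const_nhds_iff.2 h)
  exact funext fun p => tendsto_nhds_unique tendsto_const_nhds
    (this.tendstoLocallyUniformlyOn.tendsto_at (Set.mem_univ p))

end Metric

lemma exists_subseq_tendsto_dC0 {n : ℕ} {Φ : ℕ → oS n → ℝ} (hΦ : ∀ k, Φ k ∈ C0 n) :
    ∃ Ψ ∈ C0 n, ∃ φ : ℕ → ℕ, StrictMono φ ∧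
      Tendsto (fun k => dC0 n (Φ (φ k)) Ψ) atTop (𝓝 0) := by
  obtain ⟨Ψ, φ, hφ, hunif⟩ := exists_subseq_tendstoUniformlyOn_of_lipschitzOnWith
    (fun m => isCompact_Km m.succ_pos)
    (fun _ k x _ =>
      (abs_of_pos ((hΦ k).1 x)).trans_le (apply_le_two_mul_of_mem_C0 (hΦ k) x))
    fun m k => lipschitzOnWith_Km_of_mem_C0 (hΦ k) m.succ_pos
  have hloc : TendstoLocallyUniformly (fun k => Φ (φ k)) Ψ atTop :=
    tendstoLocallyUniformly_iff_forall_Km.2 hunif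
  have hΨ : Ψ ∈ C0 n := mem_C0_of_tendsto (fun k => hΦ (φ k)) fun p =>
    hloc.tendstoLocallyUniformlyOn.tendsto_at (Set.mem_univ p)
  exact ⟨Ψ, hΨ, φ, hφ, (tendsto_dC0_iff (fun k => hΦ (φ k)) hΨ).2 hloc⟩

theorem stmt16_general {n : ℕ} :
    (∀ Φ ∈ C0 n, ∀ Ψ ∈ C0 n, (dC0 n Φ Ψ = 0 ↔ Φ = Ψ)) ∧
    (∀ Φ ∈ C0 n, ∀ Ψ ∈ C0 n, dC0 n Φ Ψ = dC0 n Ψ Φ) ∧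
    (∀ Φ ∈ C0 n, ∀ Ψ ∈ C0 n, ∀ X ∈ C0 n, dC0 n Φ X ≤ dC0 n Φ Ψ + dC0 n Ψ X) ∧
    (∀ Φ : ℕ → ↥(oS n) → ℝ, (∀ k, Φ k ∈ C0 n) →
      ∃ Ψ ∈ C0 n, ∃ φ : ℕ → ℕ, StrictMono φ ∧
        Tendsto (fun k => dC0 n (Φ (φ k)) Ψ) atTop (𝓝 0)) ∧
    (∀ Φ : ℕ → ↥(oS n) → ℝ, (∀ k, Φ k ∈ C0 n) → ∀ Ψ ∈ C0 n,
      (Tendsto (fun k => dC0 n (Φ k) Ψ) atTop (𝓝 0) ↔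
        TendstoLocallyUniformly Φ Ψ atTop)) :=
  ⟨fun _ hΦ _ hΨ => dC0_eq_zero_iff hΦ hΨ, fun _ _ _ _ => dC0_comm,
    fun _ hΦ _ hΨ _ hX => dC0_triangle hΦ hΨ hX, fun _ hΦ => exists_subseq_tendsto_dC0 hΦ,
    fun _ hΦ _ hΨ => tendsto_dC0_iff hΦ hΨ⟩

/-- Lemma 4.5: `(C₀, d)` is a compact metric space, and convergence in `d`
is equivalent to locally uniform convergence on `Δₙ`. -/
theorem stmt16 {n : ℕ} (hn : 2 ≤ n) :
    (∀ Φ ∈ C0 n, ∀ Ψ ∈ C0 n, (dC0 n Φ Ψ = 0 ↔ Φ = Ψ)) ∧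
    (∀ Φ ∈ C0 n, ∀ Ψ ∈ C0 n, dC0 n Φ Ψ = dC0 n Ψ Φ) ∧
    (∀ Φ ∈ C0 n, ∀ Ψ ∈ C0 n, ∀ X ∈ C0 n, dC0 n Φ X ≤ dC0 n Φ Ψ + dC0 n Ψ X) ∧
    (∀ Φ : ℕ → ↥(oS n) → ℝ, (∀ k, Φ k ∈ C0 n) →
      ∃ Ψ ∈ C0 n, ∃ φ : ℕ → ℕ, StrictMono φ ∧
        Tendsto (fun k => dC0 n (Φ (φ k)) Ψ) atTop (𝓝 0)) ∧
    (∀ Φ : ℕ → ↥(oS n) → ℝ, (∀ k, Φ k ∈ C0 n) → ∀ Ψ ∈ C0 n,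
      (Tendsto (fun k => dC0 n (Φ k) Ψ) atTop (𝓝 0) ↔
        TendstoLocallyUniformly Φ Ψ atTop)) :=
  stmt16_general
end
end
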